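/- Let d ≥ 1, let D = d(d+3)/2, and let X be a finite subset of the unit sphere S^d ⊂ ℝ^{d+1} which is a spherical 4-design and an antipodal set. Let X' = {x_1,…,x_N} ⊆ X with N = |X|/2 and X' ∩ (−X') = ∅. Suppose φ : {1,…,N} → S^{D−1} ⊂ ℝ^D satisfies ⟨φ(i), φ(j)⟩ = g_{2,d}(⟨x_i,x_j⟩) for all i,j, where g_{2,d}(s) = ((d+1)/d)·s^2 − 1/d, that φ is injective, and that φ(i) ≠ −φ(j) for all i,j. Then Y = φ({1,…,N}) ∪ (−φ({1,…,N})) is a spherical 3-design in S^{D−1} of cardinality 2N. -/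

import Mathlib

open MeasureTheory Metric Finset
open scoped RealInnerProductSpace ENNReal Pointwise

set_option maxHeartbeats 1000000

/-- The uniform (normalized) surface probability measure on the unit sphere
`S^{n-1} ⊆ ℝ^n`. -/
noncomputable def uniformSphereMeasure (n : ℕ) :
    Measure (sphere (0 : EuclideanSpace ℝ (Fin n)) 1) :=
  ((volume : Measure (EuclideanSpace ℝ (Fin n))).toSphere Set.univ)⁻¹ •
    (volume : Measure (EuclideanSpace ℝ (Fin n))).toSphere

/-- A finite set `X` in the unit sphere `S^{n-1} ⊆ ℝ^n` is a spherical `t`-design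
if the average over `X` of every polynomial of total degree at most `t` equals
its mean value over the sphere with respect to the uniform surface measure. -/
def IsSphericalDesign (n t : ℕ)
    (X : Finset (sphere (0 : EuclideanSpace ℝ (Fin n)) 1)) : Prop :=
  ∀ f : MvPolynomial (Fin n) ℝ, f.totalDegree ≤ t →
    (∑ x ∈ X, MvPolynomial.eval (x : EuclideanSpace ℝ (Fin n)) f) / (X.card : ℝ) =
      ∫ x, MvPolynomial.eval (x : EuclideanSpace ℝ (Fin n)) f ∂(uniformSphereMeasure n)

attribute [local instance] Classical.propDecidable

variable {n : ℕ}

abbrev Eu (n : ℕ) := EuclideanSpace ℝ (Fin n)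
abbrev Sp (n : ℕ) := sphere (0 : Eu n) 1

lemma toSphere_univ_ne_zero (hn : 1 ≤ n) :
    (volume : Measure (Eu n)).toSphere Set.univ ≠ 0 := by
  rw [Measure.toSphere_apply_univ]
  have h1 : (0:ℝ≥0∞) < volume (ball (0 : Eu n) 1) := measure_ball_pos _ _ one_pos
  have h2 : (Module.finrank ℝ (Eu n) : ℝ≥0∞) ≠ 0 := by
    simp [finrank_euclideanSpace_fin]; omega
  exact mul_ne_zero h2 h1.ne'

lemma toSphere_univ_ne_top :
    (volume : Measure (Eu n)).toSphere Set.univ ≠ ⊤ := by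
  rw [Measure.toSphere_apply_univ]
  exact (ENNReal.mul_lt_top (ENNReal.natCast_lt_top _) measure_ball_lt_top).ne

lemma usm_prob (hn : 1 ≤ n) : IsProbabilityMeasure (uniformSphereMeasure n) := by
  constructor
  rw [uniformSphereMeasure, Measure.smul_apply, smul_eq_mul,
    ENNReal.inv_mul_cancel (toSphere_univ_ne_zero hn) toSphere_univ_ne_top]

/-- The map on the unit sphere induced by a linear isometry equivalence. -/
noncomputable def sphereMap (e : Eu n ≃ₗᵢ[ℝ] Eu n) (z : Sp n) : Sp n :=
  ⟨e z, by
    rw [mem_sphere_zero_iff_norm, e.norm_map]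
    exact mem_sphere_zero_iff_norm.mp z.2⟩

noncomputable def sphereHomeo (e : Eu n ≃ₗᵢ[ℝ] Eu n) : Sp n ≃ₜ Sp n where
  toFun := sphereMap e
  invFun := sphereMap e.symm
  left_inv z := Subtype.ext (e.symm_apply_apply z)
  right_inv z := Subtype.ext (e.apply_symm_apply z)
  continuous_toFun := Continuous.subtype_mk (e.continuous.comp continuous_subtype_val) _
  continuous_invFun := Continuous.subtype_mk (e.symm.continuous.comp continuous_subtype_val) _

lemma image_coe_preimage_sphereMap (e : Eu n ≃ₗᵢ[ℝ] Eu n) (s : Set (Sp n)) :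
    (Subtype.val '' (sphereMap e ⁻¹' s)) = e ⁻¹' (Subtype.val '' s) := by
  ext v
  constructor
  · rintro ⟨z, hz, rfl⟩
    exact ⟨sphereMap e z, hz, rfl⟩
  · rintro ⟨w, hw, hwv⟩
    have hv : v ∈ Sp n := by
      rw [mem_sphere_zero_iff_norm, ← e.norm_map, ← hwv]
      exact mem_sphere_zero_iff_norm.mp w.2
    refine ⟨⟨v, hv⟩, ?_, rfl⟩
    show sphereMap e ⟨v, hv⟩ ∈ s
    have : sphereMap e ⟨v, hv⟩ = w := Subtype.ext hwv.symm
    rw [this]; exact hw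

lemma smul_preimage (e : Eu n ≃ₗᵢ[ℝ] Eu n) (A : Set (Eu n)) :
    (Set.Ioo (0:ℝ) 1) • (e ⁻¹' A) = e ⁻¹' ((Set.Ioo (0:ℝ) 1) • A) := by
  ext v
  simp only [Set.mem_smul, Set.mem_preimage]
  constructor
  · rintro ⟨r, hr, a, ha, rfl⟩
    exact ⟨r, hr, e a, ha, by rw [LinearIsometryEquiv.map_smul]⟩
  · rintro ⟨r, hr, b, hb, hv⟩
    refine ⟨r, hr, e.symm b, by simpa using hb, ?_⟩
    apply e.injective
    rw [LinearIsometryEquiv.map_smul, e.apply_symm_apply, ← hv]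

lemma map_sphereMap_toSphere (e : Eu n ≃ₗᵢ[ℝ] Eu n) :
    Measure.map (sphereMap e) (volume : Measure (Eu n)).toSphere =
      (volume : Measure (Eu n)).toSphere := by
  have hme : Measurable (sphereMap e) := (sphereHomeo e).continuous.measurable
  refine Measure.ext fun s hs => ?_
  rw [Measure.map_apply hme hs, Measure.toSphere_apply' _ (hme hs),
    Measure.toSphere_apply' _ hs, image_coe_preimage_sphereMap, smul_preimage]
  congr 1
  have hE : Measure.map (⇑e) (volume : Measure (Eu n)) = volume := e.measurePreserving.map_eq
  have := MeasurableEquiv.map_apply (e.toHomeomorph.toMeasurableEquiv)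
    (μ := (volume : Measure (Eu n))) ((Set.Ioo (0:ℝ) 1) • Subtype.val '' s)
  rw [show (⇑e.toHomeomorph.toMeasurableEquiv : Eu n → Eu n) = ⇑e from rfl, hE] at this
  exact this.symm

lemma usm_sphereMap_preserving (e : Eu n ≃ₗᵢ[ℝ] Eu n) :
    MeasurePreserving (sphereMap e) (uniformSphereMeasure n) (uniformSphereMeasure n) := by
  refine ⟨(sphereHomeo e).continuous.measurable, ?_⟩
  rw [uniformSphereMeasure, Measure.map_smul, map_sphereMap_toSphere]

lemma integral_sphereMap (e : Eu n ≃ₗᵢ[ℝ] Eu n) (f : Sp n → ℝ) :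
    ∫ z, f (sphereMap e z) ∂(uniformSphereMeasure n) = ∫ z, f z ∂(uniformSphereMeasure n) :=
  (usm_sphereMap_preserving e).integral_comp (sphereHomeo e).measurableEmbedding f

lemma cont_integrable (hn : 1 ≤ n) {f : Sp n → ℝ} (hf : Continuous f) :
    Integrable f (uniformSphereMeasure n) := by
  haveI := usm_prob hn
  exact hf.integrable_of_hasCompactSupport (isClosed_tsupport f).isCompact

lemma cont_coord (a : Fin n) : Continuous fun z : Sp n => (z : Eu n) a :=
  (continuous_apply a).comp ((PiLp.continuous_ofLp 2 _).comp continuous_subtype_val)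

lemma integral_inner_pow_congr (u w : Eu n) (hu : ‖u‖ = 1) (hw : ‖w‖ = 1) (k : ℕ) :
    ∫ z, ⟪u, (z : Eu n)⟫ ^ k ∂(uniformSphereMeasure n) =
      ∫ z, ⟪w, (z : Eu n)⟫ ^ k ∂(uniformSphereMeasure n) := by
  set e := Submodule.reflection (ℝ ∙ (u - w))ᗮ with he
  have heu : e u = w := Submodule.reflection_sub (by rw [hu, hw])
  have h2 : ∀ z : Sp n, ⟪w, ((sphereMap e z : Sp n) : Eu n)⟫ = ⟪u, (z : Eu n)⟫ := by
    intro z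
    show ⟪w, e (z : Eu n)⟫ = _
    rw [← heu]
    exact e.inner_map_map u z
  have := integral_sphereMap e (fun z => ⟪w, (z : Eu n)⟫ ^ k)
  simp only [h2] at this
  exact this

lemma coord_eq_inner (a : Fin n) (z : Eu n) :
    ⟪EuclideanSpace.single a (1:ℝ), z⟫ = z a := by
  rw [EuclideanSpace.inner_single_left]; simp

lemma norm_single_one (a : Fin n) : ‖EuclideanSpace.single a (1:ℝ)‖ = 1 := by
  rw [EuclideanSpace.norm_single]; norm_num

lemma sum_coord_sq (z : Sp n) : ∑ a, ((z : Eu n) a) ^ 2 = 1 := by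
  have h1 : ⟪(z : Eu n), (z : Eu n)⟫ = 1 := by
    have : ‖(z : Eu n)‖ = 1 := mem_sphere_zero_iff_norm.mp z.2
    rw [real_inner_self_eq_norm_sq, this]; norm_num
  rw [← h1]
  simp only [PiLp.inner_apply, RCLike.inner_apply, conj_trivial, sq]

lemma integral_coord_pow_congr (hn : 1 ≤ n) (a b : Fin n) (k : ℕ) :
    ∫ z, ((z : Eu n) a) ^ k ∂(uniformSphereMeasure n) =
      ∫ z, ((z : Eu n) b) ^ k ∂(uniformSphereMeasure n) := by
  have := integral_inner_pow_congr (EuclideanSpace.single a (1:ℝ))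
    (EuclideanSpace.single b (1:ℝ)) (norm_single_one a) (norm_single_one b) k
  simpa only [coord_eq_inner] using this

lemma integral_coord_sq (hn : 1 ≤ n) (a : Fin n) :
    ∫ z, ((z : Eu n) a) ^ 2 ∂(uniformSphereMeasure n) = 1 / n := by
  haveI := usm_prob hn
  have hint : ∀ b : Fin n, Integrable (fun z : Sp n => ((z : Eu n) b) ^ 2)
      (uniformSphereMeasure n) := fun b => cont_integrable hn ((cont_coord b).pow 2)
  have hsum : ∑ b : Fin n, ∫ z, ((z : Eu n) b) ^ 2 ∂(uniformSphereMeasure n) = 1 := by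
    rw [← integral_finset_sum _ (fun b _ => hint b)]
    simp only [sum_coord_sq]
    simp
  have hcongr : ∀ b : Fin n, ∫ z, ((z : Eu n) b) ^ 2 ∂(uniformSphereMeasure n) =
      ∫ z, ((z : Eu n) a) ^ 2 ∂(uniformSphereMeasure n) :=
    fun b => integral_coord_pow_congr hn b a 2
  rw [Finset.sum_congr rfl (fun b _ => hcongr b), Finset.sum_const, card_univ,
    Fintype.card_fin, nsmul_eq_mul] at hsum
  have hn' : (n : ℝ) ≠ 0 := by positivity
  field_simp at hsum ⊢
  linarith [hsum]

lemma integral_inner_sq (hn : 1 ≤ n) (u : Eu n) (hu : ‖u‖ = 1) :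
    ∫ z, ⟪u, (z : Eu n)⟫ ^ 2 ∂(uniformSphereMeasure n) = 1 / n := by
  have a : Fin n := ⟨0, hn⟩
  calc ∫ z, ⟪u, (z : Eu n)⟫ ^ 2 ∂(uniformSphereMeasure n)
      = ∫ z, ⟪EuclideanSpace.single a (1:ℝ), (z : Eu n)⟫ ^ 2 ∂(uniformSphereMeasure n) :=
        integral_inner_pow_congr u _ hu (norm_single_one a) 2
    _ = ∫ z, ((z : Eu n) a) ^ 2 ∂(uniformSphereMeasure n) := by
        simp only [coord_eq_inner]
    _ = 1 / n := integral_coord_sq hn a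

lemma cont_inner (u : Eu n) : Continuous fun z : Sp n => ⟪u, (z : Eu n)⟫ :=
  Continuous.inner continuous_const continuous_subtype_val

lemma inner_single_single (c c' : Fin n) :
    ⟪EuclideanSpace.single c (1:ℝ), EuclideanSpace.single c' (1:ℝ)⟫ =
      if c = c' then 1 else 0 := by
  rw [coord_eq_inner, EuclideanSpace.single_apply]

lemma pairvec_norm {a b : Fin n} (hab : a ≠ b) (ε : ℝ) (hε : ε = 1 ∨ ε = -1) :
    ‖(Real.sqrt 2)⁻¹ • (EuclideanSpace.single a (1:ℝ) + ε • EuclideanSpace.single b (1:ℝ))‖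
      = 1 := by
  set sa := EuclideanSpace.single a (1:ℝ)
  set sb := EuclideanSpace.single b (1:ℝ)
  have hε2 : ε ^ 2 = 1 := by rcases hε with h | h <;> rw [h] <;> norm_num
  have hinner : ⟪(Real.sqrt 2)⁻¹ • (sa + ε • sb), (Real.sqrt 2)⁻¹ • (sa + ε • sb)⟫ = 1 := by
    rw [real_inner_smul_left, real_inner_smul_right]
    have h1 : ⟪sa + ε • sb, sa + ε • sb⟫ = 1 + ε ^ 2 := by
      rw [inner_add_left, inner_add_right, inner_add_right, real_inner_smul_left,
        real_inner_smul_left, real_inner_smul_right, real_inner_smul_right]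
      rw [inner_single_single, inner_single_single, inner_single_single, inner_single_single]
      simp [hab, hab.symm]
      ring
    rw [h1, hε2]
    have h3 : (Real.sqrt 2) ≠ 0 := by positivity
    field_simp
    rw [Real.sq_sqrt (by norm_num : (0:ℝ) ≤ 2)]; norm_num
  have h4 := real_inner_self_eq_norm_sq ((Real.sqrt 2)⁻¹ • (sa + ε • sb))
  rw [hinner] at h4
  nlinarith [norm_nonneg ((Real.sqrt 2)⁻¹ • (sa + ε • sb))]

lemma pairvec_inner (a b : Fin n) (ε : ℝ) (z : Eu n) :
    ⟪(Real.sqrt 2)⁻¹ • (EuclideanSpace.single a (1:ℝ) + ε • EuclideanSpace.single b (1:ℝ)),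
      z⟫ = (Real.sqrt 2)⁻¹ * (z a + ε * z b) := by
  rw [real_inner_smul_left, inner_add_left, real_inner_smul_left, coord_eq_inner,
    coord_eq_inner]

lemma sqrt2_inv_sq : ((Real.sqrt 2)⁻¹ : ℝ) ^ 2 = 1/2 := by
  rw [inv_pow, Real.sq_sqrt (by norm_num : (0:ℝ) ≤ 2)]
  norm_num

lemma integral_coord_mul (hn : 1 ≤ n) {a b : Fin n} (hab : a ≠ b) :
    ∫ z, ((z : Eu n) a) * ((z : Eu n) b) ∂(uniformSphereMeasure n) = 0 := by
  set u := (Real.sqrt 2)⁻¹ • (EuclideanSpace.single a (1:ℝ) +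
    (1:ℝ) • EuclideanSpace.single b (1:ℝ)) with hu
  set v := (Real.sqrt 2)⁻¹ • (EuclideanSpace.single a (1:ℝ) +
    (-1:ℝ) • EuclideanSpace.single b (1:ℝ)) with hv
  have hun : ‖u‖ = 1 := pairvec_norm hab 1 (Or.inl rfl)
  have hvn : ‖v‖ = 1 := pairvec_norm hab (-1) (Or.inr rfl)
  have key : ∀ z : Sp n, ((z : Eu n) a) * ((z : Eu n) b) =
      (⟪u, (z : Eu n)⟫ ^ 2 - ⟪v, (z : Eu n)⟫ ^ 2) / 2 := by
    intro z
    rw [hu, hv, pairvec_inner, pairvec_inner]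
    have h5 : ∀ s t : ℝ, (((Real.sqrt 2)⁻¹*(s+1*t))^2 - ((Real.sqrt 2)⁻¹*(s+(-1)*t))^2)/2
        = ((Real.sqrt 2)⁻¹)^2*(2*s*t) := by intro s t; ring
    rw [h5, sqrt2_inv_sq]
    ring
  have hiu : Integrable (fun z : Sp n => ⟪u, (z : Eu n)⟫ ^ 2) (uniformSphereMeasure n) :=
    cont_integrable hn ((cont_inner u).pow 2)
  have hiv : Integrable (fun z : Sp n => ⟪v, (z : Eu n)⟫ ^ 2) (uniformSphereMeasure n) :=
    cont_integrable hn ((cont_inner v).pow 2)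
  calc ∫ z, ((z : Eu n) a) * ((z : Eu n) b) ∂(uniformSphereMeasure n)
      = ∫ z, (⟪u, (z : Eu n)⟫ ^ 2 - ⟪v, (z : Eu n)⟫ ^ 2) / 2 ∂(uniformSphereMeasure n) := by
        exact integral_congr_ae (Filter.Eventually.of_forall key)
    _ = ((∫ z, ⟪u, (z : Eu n)⟫ ^ 2 ∂(uniformSphereMeasure n)) -
          ∫ z, ⟪v, (z : Eu n)⟫ ^ 2 ∂(uniformSphereMeasure n)) / 2 := by
        rw [integral_div, integral_sub hiu hiv]
    _ = 0 := by
        rw [integral_inner_sq hn u hun, integral_inner_sq hn v hvn]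
        ring

lemma usm_integral_comp_neg (f : Sp n → ℝ) :
    ∫ z, f (-z) ∂(uniformSphereMeasure n) = ∫ z, f z ∂(uniformSphereMeasure n) := by
  have h : ∀ z : Sp n, sphereMap (LinearIsometryEquiv.neg ℝ : Eu n ≃ₗᵢ[ℝ] Eu n) z = -z :=
    fun z => Subtype.ext rfl
  have := integral_sphereMap (LinearIsometryEquiv.neg ℝ : Eu n ≃ₗᵢ[ℝ] Eu n) f
  simp only [h] at this
  exact this

lemma usm_integral_odd (f : Sp n → ℝ) (hodd : ∀ z, f (-z) = - f z) :
    ∫ z, f z ∂(uniformSphereMeasure n) = 0 := by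
  have h := usm_integral_comp_neg f
  simp only [hodd] at h
  rw [integral_neg] at h
  linarith

lemma integral_coord_pow4 (hn2 : 2 ≤ n) (a : Fin n) :
    ∫ z, ((z : Eu n) a) ^ 4 ∂(uniformSphereMeasure n) = 3 / (n * (n + 2)) := by
  have hn : 1 ≤ n := by omega
  haveI := usm_prob hn
  have a0 : Fin n := ⟨0, by omega⟩
  set α := ∫ z, ((z : Eu n) a0) ^ 4 ∂(uniformSphereMeasure n) with hα
  have hαa : ∀ b : Fin n, ∫ z, ((z : Eu n) b) ^ 4 ∂(uniformSphereMeasure n) = α :=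
    fun b => integral_coord_pow_congr hn b a0 4
  have hint4 : ∀ b : Fin n, Integrable (fun z : Sp n => ((z : Eu n) b) ^ 4)
      (uniformSphereMeasure n) := fun b => cont_integrable hn ((cont_coord b).pow 4)
  have hint22 : ∀ b c : Fin n, Integrable
      (fun z : Sp n => ((z : Eu n) b) ^ 2 * ((z : Eu n) c) ^ 2) (uniformSphereMeasure n) :=
    fun b c => cont_integrable hn (((cont_coord b).pow 2).mul ((cont_coord c).pow 2))
  -- mixed fourth moments
  have hγ : ∀ b c : Fin n, b ≠ c →
      ∫ z, ((z : Eu n) b) ^ 2 * ((z : Eu n) c) ^ 2 ∂(uniformSphereMeasure n) = α / 3 := by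
    intro b c hbc
    set u1 := (Real.sqrt 2)⁻¹ • (EuclideanSpace.single b (1:ℝ) +
      (1:ℝ) • EuclideanSpace.single c (1:ℝ)) with hu1
    set v1 := (Real.sqrt 2)⁻¹ • (EuclideanSpace.single b (1:ℝ) +
      (-1:ℝ) • EuclideanSpace.single c (1:ℝ)) with hv1
    have hu1n : ‖u1‖ = 1 := pairvec_norm hbc 1 (Or.inl rfl)
    have hv1n : ‖v1‖ = 1 := pairvec_norm hbc (-1) (Or.inr rfl)
    have hIu : ∫ z, ⟪u1, (z : Eu n)⟫ ^ 4 ∂(uniformSphereMeasure n) = α := by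
      rw [integral_inner_pow_congr u1 (EuclideanSpace.single a0 (1:ℝ)) hu1n
        (norm_single_one a0) 4]
      simp only [coord_eq_inner]
      exact hα.symm
    have hIv : ∫ z, ⟪v1, (z : Eu n)⟫ ^ 4 ∂(uniformSphereMeasure n) = α := by
      rw [integral_inner_pow_congr v1 (EuclideanSpace.single a0 (1:ℝ)) hv1n
        (norm_single_one a0) 4]
      simp only [coord_eq_inner]
      exact hα.symm
    have key : ∀ z : Sp n, ⟪u1, (z : Eu n)⟫ ^ 4 + ⟪v1, (z : Eu n)⟫ ^ 4 =
        ((z : Eu n) b) ^ 4 / 2 + (((z : Eu n) c) ^ 4 / 2 +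
          3 * (((z : Eu n) b) ^ 2 * ((z : Eu n) c) ^ 2)) := by
      intro z
      rw [hu1, hv1, pairvec_inner, pairvec_inner]
      have h5 : ∀ s t : ℝ, ((Real.sqrt 2)⁻¹*(s+1*t))^4 + ((Real.sqrt 2)⁻¹*(s+(-1)*t))^4
          = (((Real.sqrt 2)⁻¹)^2)^2*(2*s^4+12*s^2*t^2+2*t^4) := by intro s t; ring
      rw [h5, sqrt2_inv_sq]
      ring
    have hiu : Integrable (fun z : Sp n => ⟪u1, (z : Eu n)⟫ ^ 4) (uniformSphereMeasure n) :=
      cont_integrable hn ((cont_inner u1).pow 4)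
    have hiv : Integrable (fun z : Sp n => ⟪v1, (z : Eu n)⟫ ^ 4) (uniformSphereMeasure n) :=
      cont_integrable hn ((cont_inner v1).pow 4)
    have h7 : (∫ z, (⟪u1, (z : Eu n)⟫ ^ 4 + ⟪v1, (z : Eu n)⟫ ^ 4) ∂(uniformSphereMeasure n))
        = 2 * α := by rw [integral_add hiu hiv, hIu, hIv]; ring
    have h8 : (∫ z, (⟪u1, (z : Eu n)⟫ ^ 4 + ⟪v1, (z : Eu n)⟫ ^ 4) ∂(uniformSphereMeasure n))
        = α / 2 + (α / 2 + 3 * ∫ z, ((z : Eu n) b) ^ 2 * ((z : Eu n) c) ^ 2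
            ∂(uniformSphereMeasure n)) := by
      rw [integral_congr_ae (Filter.Eventually.of_forall key)]
      have hg : Integrable (fun z : Sp n => ((z : Eu n) c) ^ 4 / 2 +
          3 * (((z : Eu n) b) ^ 2 * ((z : Eu n) c) ^ 2)) (uniformSphereMeasure n) :=
        ((hint4 c).div_const 2).add ((hint22 b c).const_mul 3)
      rw [integral_add ((hint4 b).div_const 2) hg]
      rw [integral_add ((hint4 c).div_const 2) ((hint22 b c).const_mul 3),
        MeasureTheory.integral_const_mul, integral_div, integral_div, hαa b, hαa c]
    rw [h7] at h8
    linarith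
  -- value of each second-moment-squared integral
  have hval : ∀ b c : Fin n, ∫ z, ((z : Eu n) b) ^ 2 * ((z : Eu n) c) ^ 2
      ∂(uniformSphereMeasure n) = if b = c then α else α / 3 := by
    intro b c
    by_cases h : b = c
    · subst h
      rw [if_pos rfl]
      rw [show (fun z : Sp n => ((z : Eu n) b) ^ 2 * ((z : Eu n) b) ^ 2)
          = (fun z : Sp n => ((z : Eu n) b) ^ 4) from funext (fun z => by ring)]
      exact hαa b
    · rw [if_neg h]
      exact hγ b c h
  -- total fourth moment
  have htot : ∑ b : Fin n, ∑ c : Fin n,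
      (∫ z, ((z : Eu n) b) ^ 2 * ((z : Eu n) c) ^ 2 ∂(uniformSphereMeasure n)) = 1 := by
    have step1 : ∀ b : Fin n, ∑ c : Fin n,
        (∫ z, ((z : Eu n) b) ^ 2 * ((z : Eu n) c) ^ 2 ∂(uniformSphereMeasure n)) =
        ∫ z, ∑ c : Fin n, ((z : Eu n) b) ^ 2 * ((z : Eu n) c) ^ 2 ∂(uniformSphereMeasure n) :=
      fun b => (integral_finset_sum _ (fun c _ => hint22 b c)).symm
    rw [Finset.sum_congr rfl (fun b _ => step1 b),
      ← integral_finset_sum _ (fun b _ => integrable_finset_sum _ (fun c _ => hint22 b c))]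
    have hone : ∀ z : Sp n, ∑ b : Fin n, ∑ c : Fin n,
        ((z : Eu n) b) ^ 2 * ((z : Eu n) c) ^ 2 = 1 := by
      intro z
      rw [← Finset.sum_mul_sum, sum_coord_sq z]
      norm_num
    rw [integral_congr_ae (Filter.Eventually.of_forall hone)]
    simp
  -- solve for α
  rw [Finset.sum_congr rfl (fun b _ => Finset.sum_congr rfl (fun c _ => hval b c))] at htot
  have hrow : ∀ b : Fin n, ∑ c : Fin n, (if b = c then α else α / 3)
      = (n : ℝ) * (α / 3) + 2 * α / 3 := by
    intro b
    have hsplit : ∀ c : Fin n, (if b = c then α else α / 3)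
        = α / 3 + (if b = c then 2 * α / 3 else 0) := by
      intro c; by_cases h : b = c <;> simp [h] <;> ring
    rw [Finset.sum_congr rfl (fun c _ => hsplit c), Finset.sum_add_distrib,
      Finset.sum_const, Finset.sum_ite_eq]
    simp [card_univ]
  rw [Finset.sum_congr rfl (fun b _ => hrow b), Finset.sum_const, card_univ,
    Fintype.card_fin, nsmul_eq_mul] at htot
  have hn0 : (0:ℝ) < n := by positivity
  have hαval : α = 3 / ((n:ℝ) * (n + 2)) := by
    rw [eq_div_iff (by positivity)]
    nlinarith [htot]
  rw [hαa a, hαval]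

lemma integral_inner_pow4' (hn2 : 2 ≤ n) (u : Eu n) (hu : ‖u‖ = 1) :
    ∫ z, ⟪u, (z : Eu n)⟫ ^ 4 ∂(uniformSphereMeasure n) = 3 / (n * (n + 2)) := by
  have a0 : Fin n := ⟨0, by omega⟩
  rw [integral_inner_pow_congr u (EuclideanSpace.single a0 (1:ℝ)) hu (norm_single_one a0) 4]
  simp only [coord_eq_inner]
  exact integral_coord_pow4 hn2 a0

noncomputable def linPoly (w : Eu n) : MvPolynomial (Fin n) ℝ :=
  ∑ a, MvPolynomial.C (w a) * MvPolynomial.X a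

lemma eval_linPoly (w z : Eu n) : MvPolynomial.eval z (linPoly w) = ⟪w, z⟫ := by
  simp [linPoly, PiLp.inner_apply, RCLike.inner_apply, mul_comm]

lemma linPoly_totalDegree (w : Eu n) : (linPoly w).totalDegree ≤ 1 := by
  refine (MvPolynomial.totalDegree_finset_sum _ _).trans (Finset.sup_le fun a _ => ?_)
  refine (MvPolynomial.totalDegree_mul _ _).trans ?_
  simp [MvPolynomial.totalDegree_C, MvPolynomial.totalDegree_X]

lemma design_card_ne_zero {t : ℕ} (hn : 1 ≤ n) (X : Finset (Sp n))
    (hdes : IsSphericalDesign n t X) : (X.card : ℝ) ≠ 0 := by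
  haveI := usm_prob hn
  have h := hdes 1 (by simp)
  simp only [map_one] at h
  rw [Finset.sum_const, nsmul_eq_mul, mul_one, integral_const, smul_eq_mul, mul_one,
    probReal_univ] at h
  intro h0
  rw [h0, div_zero] at h
  simp at h

lemma design_sum_inner_pow {t : ℕ} (hn : 1 ≤ n) (X : Finset (Sp n))
    (hdes : IsSphericalDesign n t X) (w : Sp n) (k : ℕ) (hk : k ≤ t) :
    ∑ z ∈ X, ⟪(w : Eu n), (z : Eu n)⟫ ^ k =
      (X.card : ℝ) * ∫ z, ⟪(w : Eu n), (z : Eu n)⟫ ^ k ∂(uniformSphereMeasure n) := by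
  have hdeg : ((linPoly (w : Eu n)) ^ k).totalDegree ≤ t := by
    refine le_trans (MvPolynomial.totalDegree_pow _ _) ?_
    calc k * (linPoly (w : Eu n)).totalDegree ≤ k * 1 :=
          Nat.mul_le_mul_left k (linPoly_totalDegree _)
      _ ≤ t := by omega
  have h := hdes ((linPoly (w : Eu n)) ^ k) hdeg
  simp only [map_pow, eval_linPoly] at h
  have hc := design_card_ne_zero hn X hdes
  field_simp at h
  simp only [PiLp.inner_apply, RCLike.inner_apply, starRingEnd_apply, star_trivial] at h ⊢
  linarith [h]

lemma finsupp_sum_eq_zero {σ : Type*} (m : σ →₀ ℕ) (h : (m.sum fun _ e => e) = 0) : m = 0 := by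
  ext a
  simp only [Finsupp.coe_zero, Pi.zero_apply]
  by_contra ha
  have hmem : a ∈ m.support := Finsupp.mem_support_iff.mpr ha
  have : m a ≤ m.sum fun _ e => e := Finset.single_le_sum (fun _ _ => Nat.zero_le _) hmem
  omega

lemma finsupp_sum_eq_two {σ : Type*} [DecidableEq σ] (m : σ →₀ ℕ)
    (h : (m.sum fun _ e => e) = 2) :
    ∃ a b, m = Finsupp.single a 1 + Finsupp.single b 1 := by
  have hcard : m.toMultiset.card = 2 := by
    rw [Finsupp.card_toMultiset]; exact h
  obtain ⟨a, b, hab⟩ := Multiset.card_eq_two.mp hcard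
  refine ⟨a, b, ?_⟩
  have : m.toMultiset = {a} + {b} := by rw [hab]; rfl
  have h2 := congrArg Multiset.toFinsupp this
  rw [Finsupp.toMultiset_toFinsupp] at h2
  rw [h2, map_add, Multiset.toFinsupp_singleton, Multiset.toFinsupp_singleton]

lemma finsupp_prod_pow_neg {σ : Type*} (m : σ →₀ ℕ) (y : σ → ℝ) :
    (m.prod fun a e => (-(y a)) ^ e) = (-1 : ℝ) ^ (m.sum fun _ e => e) *
      m.prod fun a e => (y a) ^ e := by
  rw [Finsupp.prod, Finsupp.prod, Finsupp.sum]
  rw [← Finset.prod_pow_eq_pow_sum, ← Finset.prod_mul_distrib]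
  exact Finset.prod_congr rfl fun a _ => by rw [neg_pow]

lemma finsupp_prod_two {σ : Type*} [DecidableEq σ] (a b : σ) (y : σ → ℝ) :
    ((Finsupp.single a 1 + Finsupp.single b 1).prod fun c e => (y c) ^ e) = y a * y b := by
  rw [Finsupp.prod_add_index' (fun c => pow_zero (y c)) (fun c e1 e2 => pow_add (y c) e1 e2)]
  simp [Finsupp.prod_single_index]

lemma neg_inj_sphere {N : ℕ} (v : Fin N → Sp n) (hvinj : Function.Injective v) :
    Function.Injective fun i => -v i := by
  intro i j h
  apply hvinj
  have h2 := congrArg (fun w : Sp n => -w) h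
  simpa using h2

lemma antipodal_disjoint {N : ℕ} (v : Fin N → Sp n) (hvneg : ∀ i j, v i ≠ -v j) :
    Disjoint (Finset.univ.image v) (Finset.univ.image fun i => -v i) := by
  rw [Finset.disjoint_left]
  rintro a ha hb
  obtain ⟨i, _, rfl⟩ := Finset.mem_image.mp ha
  obtain ⟨j, _, hj⟩ := Finset.mem_image.mp hb
  exact hvneg i j hj.symm

lemma sum_antipodal {N : ℕ} (v : Fin N → Sp n) (hvinj : Function.Injective v)
    (hvneg : ∀ i j, v i ≠ -v j) (g : Sp n → ℝ) :
    ∑ y ∈ (Finset.univ.image v ∪ Finset.univ.image fun i => -v i), g y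
      = ∑ i, g (v i) + ∑ i, g (-v i) := by
  rw [Finset.sum_union (antipodal_disjoint v hvneg),
    Finset.sum_image (fun i _ j _ h => hvinj h),
    Finset.sum_image (fun i _ j _ h => neg_inj_sphere v hvinj h)]

lemma card_antipodal {N : ℕ} (v : Fin N → Sp n) (hvinj : Function.Injective v)
    (hvneg : ∀ i j, v i ≠ -v j) :
    (Finset.univ.image v ∪ Finset.univ.image fun i => -v i).card = 2 * N := by
  rw [Finset.card_union_of_disjoint (antipodal_disjoint v hvneg),
    Finset.card_image_of_injective _ hvinj,
    Finset.card_image_of_injective _ (neg_inj_sphere v hvinj), Finset.card_univ,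
    Fintype.card_fin]
  omega

/-- Let `X ⊆ S^d` be an antipodal spherical `4`-design and
`X' = {x_1, …, x_N} ⊆ X` a half of `X` with no antipodal pair. If
`φ : {1,…,N} → S^{D-1}` (with `D = d(d+3)/2`) is injective, satisfies
`⟨φ(i),φ(j)⟩ = g_{2,d}(⟨x_i,x_j⟩)` and `φ(i) ≠ -φ(j)`, then
`φ({1,…,N}) ∪ (-φ({1,…,N}))` is a spherical `3`-design in `S^{D-1}` of
cardinality `2N`. -/
theorem half_design_image_is_three_design (d N D : ℕ) (hd : 1 ≤ d)
    (hD : 2 * D = d * (d + 3))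
    (X : Finset (sphere (0 : EuclideanSpace ℝ (Fin (d+1))) 1))
    (hdes : IsSphericalDesign (d+1) 4 X)
    (hant : X.image (fun x => -x) = X)
    (x : Fin N → sphere (0 : EuclideanSpace ℝ (Fin (d+1))) 1)
    (hxinj : Function.Injective x) (hxX : ∀ i, x i ∈ X)
    (hcard : 2 * N = X.card)
    (hxneg : ∀ i j, x i ≠ -x j)
    (φ : Fin N → sphere (0 : EuclideanSpace ℝ (Fin D)) 1)
    (hφ : ∀ i j, ⟪(φ i : EuclideanSpace ℝ (Fin D)), (φ j : EuclideanSpace ℝ (Fin D))⟫ =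
      ((d + 1) / d) *
        ⟪(x i : EuclideanSpace ℝ (Fin (d+1))), (x j : EuclideanSpace ℝ (Fin (d+1)))⟫ ^ 2
        - 1 / d)
    (hφinj : Function.Injective φ) (hφneg : ∀ i j, φ i ≠ -φ j) :
    IsSphericalDesign D 3 (Finset.univ.image φ ∪ Finset.univ.image fun i => -φ i) ∧
    (Finset.univ.image φ ∪ Finset.univ.image fun i => -φ i).card = 2 * N := by
  have hn1 : 1 ≤ d + 1 := by omega
  have hD2 : 2 ≤ D := by nlinarith
  have hcX : (X.card : ℝ) ≠ 0 := design_card_ne_zero hn1 X hdes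
  have hXcard0 : X.card ≠ 0 := fun h => hcX (by rw [h]; simp)
  have hN : 0 < N := by omega
  have hdr0 : (d:ℝ) ≠ 0 := by positivity
  have hDr : 2 * (D:ℝ) = (d:ℝ) * ((d:ℝ) + 3) := by exact_mod_cast hD
  have hDr0 : (D:ℝ) ≠ 0 := by positivity
  -- decomposition of X
  have hXeq : Finset.univ.image x ∪ Finset.univ.image (fun i => -x i) = X := by
    apply Finset.eq_of_subset_of_card_le
    · intro a ha
      rcases Finset.mem_union.mp ha with h | h
      · obtain ⟨i, _, rfl⟩ := Finset.mem_image.mp h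
        exact hxX i
      · obtain ⟨i, _, rfl⟩ := Finset.mem_image.mp h
        rw [← hant]
        exact Finset.mem_image.mpr ⟨x i, hxX i, rfl⟩
    · rw [card_antipodal x hxinj hxneg]
      omega
  have hXdec : ∀ g : Sp (d+1) → ℝ, ∑ w ∈ X, g w = ∑ i, g (x i) + ∑ i, g (-x i) := by
    intro g
    rw [← hXeq]
    exact sum_antipodal x hxinj hxneg g
  -- row sums for even powers
  have hrow : ∀ (k : ℕ), k ≤ 4 → Even k → ∀ w : Sp (d+1),
      ∑ j, ⟪(w : Eu (d+1)), (x j : Eu (d+1))⟫ ^ k = ((X.card : ℝ)/2) *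
        ∫ z, ⟪(w : Eu (d+1)), (z : Eu (d+1))⟫ ^ k ∂(uniformSphereMeasure (d+1)) := by
    intro k hk hke w
    have h := design_sum_inner_pow hn1 X hdes w k hk
    rw [hXdec (fun z => ⟪(w : Eu (d+1)), (z : Eu (d+1))⟫ ^ k)] at h
    have heq : ∀ j, ⟪(w : Eu (d+1)), ((-x j : Sp (d+1)) : Eu (d+1))⟫ ^ k
        = ⟪(w : Eu (d+1)), (x j : Eu (d+1))⟫ ^ k := by
      intro j
      show ⟪(w : Eu (d+1)), -(x j : Eu (d+1))⟫ ^ k = _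
      rw [inner_neg_right]
      exact hke.neg_pow _
    simp only [heq] at h
    linarith
  have hnorm_x : ∀ i, ‖(x i : Eu (d+1))‖ = 1 := fun i => mem_sphere_zero_iff_norm.mp (x i).2
  have hc2N : (X.card : ℝ) = 2 * N := by exact_mod_cast hcard.symm
  -- second moments of the half set
  have hT2 : ∑ i, ∑ j, ⟪(x i : Eu (d+1)), (x j : Eu (d+1))⟫ ^ 2
      = (N:ℝ)^2 * (1/((d:ℝ)+1)) := by
    have hrow2 : ∀ i, ∑ j, ⟪(x i : Eu (d+1)), (x j : Eu (d+1))⟫ ^ 2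
        = (N:ℝ) * (1/((d:ℝ)+1)) := by
      intro i
      rw [hrow 2 (by norm_num) even_two (x i),
        integral_inner_sq hn1 ((x i : Eu (d+1))) (hnorm_x i), hc2N]
      push_cast
      ring
    rw [Finset.sum_congr rfl (fun i _ => hrow2 i), Finset.sum_const, Finset.card_univ,
      Fintype.card_fin, nsmul_eq_mul]
    ring
  have hT4 : ∑ i, ∑ j, ⟪(x i : Eu (d+1)), (x j : Eu (d+1))⟫ ^ 4
      = (N:ℝ)^2 * (3/(((d:ℝ)+1)*((d:ℝ)+3))) := by
    have hrow4 : ∀ i, ∑ j, ⟪(x i : Eu (d+1)), (x j : Eu (d+1))⟫ ^ 4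
        = (N:ℝ) * (3/(((d:ℝ)+1)*((d:ℝ)+3))) := by
      intro i
      rw [hrow 4 (by norm_num) (by decide) (x i),
        integral_inner_pow4' (by omega) ((x i : Eu (d+1))) (hnorm_x i), hc2N]
      push_cast
      ring
    rw [Finset.sum_congr rfl (fun i _ => hrow4 i), Finset.sum_const, Finset.card_univ,
      Fintype.card_fin, nsmul_eq_mul]
    ring
  -- frame potential of φ
  have hQ : ∑ i, ∑ j, ⟪(φ i : Eu D), (φ j : Eu D)⟫ ^ 2 = (N:ℝ)^2 / D := by
    have hexp : ∀ i j, ⟪(φ i : Eu D), (φ j : Eu D)⟫ ^ 2 =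
        (((d:ℝ)+1)^2/(d:ℝ)^2) * ⟪(x i : Eu (d+1)), (x j : Eu (d+1))⟫ ^ 4
          - (2*((d:ℝ)+1)/(d:ℝ)^2) * ⟪(x i : Eu (d+1)), (x j : Eu (d+1))⟫ ^ 2
          + 1/(d:ℝ)^2 := by
      intro i j
      rw [hφ i j]
      field_simp
      ring
    have hsplit : ∑ i, ∑ j, ⟪(φ i : Eu D), (φ j : Eu D)⟫ ^ 2 =
        (((d:ℝ)+1)^2/(d:ℝ)^2) * (∑ i, ∑ j, ⟪(x i : Eu (d+1)), (x j : Eu (d+1))⟫ ^ 4)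
          - (2*((d:ℝ)+1)/(d:ℝ)^2) * (∑ i, ∑ j, ⟪(x i : Eu (d+1)), (x j : Eu (d+1))⟫ ^ 2)
          + (N:ℝ)^2 * (1/(d:ℝ)^2) := by
      rw [Finset.sum_congr rfl (fun i _ => Finset.sum_congr rfl (fun j _ => hexp i j))]
      simp only [Finset.sum_add_distrib, Finset.sum_sub_distrib, ← Finset.mul_sum,
        Finset.sum_const, Finset.card_univ, Fintype.card_fin, nsmul_eq_mul]
      ring
    rw [hsplit, hT2, hT4]
    have hDval : (D:ℝ) = (d:ℝ)*((d:ℝ)+3)/2 := by linarith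
    rw [hDval]
    have h1 : (d:ℝ) + 1 ≠ 0 := by positivity
    have h3 : (d:ℝ) + 3 ≠ 0 := by positivity
    field_simp
    ring
  -- the Gram/projection matrix fact
  have hip : ∀ i j, ⟪(φ i : Eu D), (φ j : Eu D)⟫ = ∑ a, (φ i : Eu D) a * (φ j : Eu D) a := by
    intro i j
    simp [PiLp.inner_apply, RCLike.inner_apply, mul_comm]
  have hSfact : ∀ a b : Fin D, (∑ i, (φ i : Eu D) a * (φ i : Eu D) b)
      = if a = b then (N:ℝ)/D else 0 := by
    set S : Fin D → Fin D → ℝ := fun a b => ∑ i, (φ i : Eu D) a * (φ i : Eu D) b with hS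
    set F : Fin D → Fin D → Fin N → Fin N → ℝ := fun a b i j =>
      ((φ i : Eu D) a * (φ i : Eu D) b) * ((φ j : Eu D) a * (φ j : Eu D) b) with hF
    have e2 : ∀ a b, (S a b)^2 = ∑ i, ∑ j, F a b i j := by
      intro a b
      rw [hS, sq, Finset.sum_mul_sum]
    have e1 : ∀ i j, ⟪(φ i : Eu D), (φ j : Eu D)⟫ ^ 2 = ∑ a, ∑ b, F a b i j := by
      intro i j
      rw [hip i j, sq, Finset.sum_mul_sum]
      exact Finset.sum_congr rfl fun a _ => Finset.sum_congr rfl fun b _ => by rw [hF]; ring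
    have hS2 : ∑ a, ∑ b, (S a b)^2 = (N:ℝ)^2 / D := by
      rw [Finset.sum_congr rfl (fun a _ => Finset.sum_congr rfl (fun b _ => e2 a b))]
      rw [← hQ, Finset.sum_congr rfl (fun i _ => Finset.sum_congr rfl (fun j _ => e1 i j))]
      -- swap the order of summation
      rw [show (∑ i, ∑ j, ∑ a, ∑ b, F a b i j) = ∑ i, ∑ a, ∑ j, ∑ b, F a b i j from
        Finset.sum_congr rfl fun i _ => Finset.sum_comm]
      rw [show (∑ i, ∑ a, ∑ j, ∑ b, F a b i j) = ∑ a, ∑ i, ∑ j, ∑ b, F a b i j from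
        Finset.sum_comm]
      refine Finset.sum_congr rfl fun a _ => ?_
      rw [show (∑ i : Fin N, ∑ j : Fin N, ∑ b : Fin D, F a b i j)
          = ∑ i : Fin N, ∑ b : Fin D, ∑ j : Fin N, F a b i j from
        Finset.sum_congr rfl fun i _ => Finset.sum_comm]
      exact Finset.sum_comm
    have hnorm_φ : ∀ i, ⟪(φ i : Eu D), (φ i : Eu D)⟫ = 1 := by
      intro i
      have : ‖(φ i : Eu D)‖ = 1 := mem_sphere_zero_iff_norm.mp (φ i).2
      rw [real_inner_self_eq_norm_sq, this]
      norm_num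
    have htr : ∑ a, S a a = (N:ℝ) := by
      rw [hS]
      rw [Finset.sum_comm]
      have : ∀ i : Fin N, ∑ a, (φ i : Eu D) a * (φ i : Eu D) a = 1 := by
        intro i
        rw [← hip i i, hnorm_φ i]
      rw [Finset.sum_congr rfl fun i _ => this i]
      simp
    have hzero : ∑ a, ∑ b, (S a b - (if a = b then (N:ℝ)/D else 0))^2 = 0 := by
      have expand : ∀ a b : Fin D, (S a b - (if a = b then (N:ℝ)/D else 0))^2
          = (S a b)^2 - 2*((N:ℝ)/D)*(if a = b then S a b else 0)
            + (if a = b then ((N:ℝ)/D)^2 else 0) := by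
        intro a b
        by_cases h : a = b <;> simp [h] <;> ring
      rw [Finset.sum_congr rfl (fun a _ => Finset.sum_congr rfl (fun b _ => expand a b))]
      simp only [Finset.sum_add_distrib, Finset.sum_sub_distrib, ← Finset.mul_sum]
      have hd1 : ∑ a : Fin D, ∑ b : Fin D, (if a = b then S a b else 0) = ∑ a, S a a := by
        refine Finset.sum_congr rfl fun a _ => ?_
        rw [Finset.sum_ite_eq]
        simp
      have hd2 : ∑ a : Fin D, ∑ b : Fin D, (if a = b then ((N:ℝ)/D)^2 else 0)
          = (D:ℝ) * ((N:ℝ)/D)^2 := by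
        have : ∀ a : Fin D, ∑ b : Fin D, (if a = b then ((N:ℝ)/D)^2 else 0)
            = ((N:ℝ)/D)^2 := by
          intro a
          rw [Finset.sum_ite_eq]
          simp
        rw [Finset.sum_congr rfl fun a _ => this a, Finset.sum_const, Finset.card_univ,
          Fintype.card_fin, nsmul_eq_mul]
      rw [hS2, hd1, hd2, htr]
      field_simp
      ring
    intro a b
    have h1 : ∀ a ∈ (Finset.univ : Finset (Fin D)),
        (0:ℝ) ≤ ∑ b, (S a b - (if a = b then (N:ℝ)/D else 0))^2 :=
      fun a _ => Finset.sum_nonneg fun b _ => sq_nonneg _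
    have h2 := (Finset.sum_eq_zero_iff_of_nonneg h1).mp hzero a (Finset.mem_univ a)
    have h3 := (Finset.sum_eq_zero_iff_of_nonneg
      (fun b _ => sq_nonneg (S a b - (if a = b then (N:ℝ)/D else 0)))).mp h2 b
      (Finset.mem_univ b)
    have h4 : S a b - (if a = b then (N:ℝ)/D else 0) = 0 := by
      nlinarith [h3]
    have : S a b = (if a = b then (N:ℝ)/D else 0) := by linarith
    exact this
  -- concluding: Y is a 3-design
  have hD1 : 1 ≤ D := by omega
  haveI := usm_prob hD1
  have hcY : ((2*N : ℕ) : ℝ) ≠ 0 := by positivity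
  refine ⟨?_, card_antipodal φ hφinj hφneg⟩
  intro f hf
  rw [card_antipodal φ hφinj hφneg]
  set Y := Finset.univ.image φ ∪ Finset.univ.image fun i => -φ i with hY
  have hcont : ∀ m : Fin D →₀ ℕ, Continuous fun z : Sp D =>
      (m.prod fun a e => ((z : Eu D) a) ^ e) := by
    intro m
    show Continuous fun z : Sp D => ∏ a ∈ m.support, ((z : Eu D) a) ^ m a
    exact continuous_finset_prod _ fun a _ => (cont_coord a).pow _
  have hintm : ∀ m : Fin D →₀ ℕ, Integrable (fun z : Sp D =>
      (m.prod fun a e => ((z : Eu D) a) ^ e)) (uniformSphereMeasure D) :=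
    fun m => cont_integrable hD1 (hcont m)
  -- the per-monomial statement
  have hmono : ∀ m : Fin D →₀ ℕ, (m.sum fun _ e => e) ≤ 3 →
      (∑ y ∈ Y, (m.prod fun a e => ((y : Eu D) a) ^ e)) / ((2*N : ℕ) : ℝ)
        = ∫ z, (m.prod fun a e => ((z : Eu D) a) ^ e) ∂(uniformSphereMeasure D) := by
    intro m hm
    have hYsum := sum_antipodal φ hφinj hφneg (fun y => m.prod fun a e => ((y : Eu D) a) ^ e)
    have hnegP : ∀ y : Sp D, (Finsupp.prod m fun a e => (((-y : Sp D) : Eu D) a) ^ e)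
        = (-1:ℝ) ^ (m.sum fun _ e => e) * m.prod fun a e => ((y : Eu D) a) ^ e := by
      intro y
      have hcoe : ∀ a : Fin D, ((-y : Sp D) : Eu D) a = -((y : Eu D) a) := fun a => rfl
      simp only [hcoe]
      exact finsupp_prod_pow_neg m _
    rcases Nat.even_or_odd (m.sum fun _ e => e) with hke | hko
    · -- even degree: 0 or 2
      obtain ⟨c, hc⟩ := hke
      have hc01 : c = 0 ∨ c = 1 := by omega
      rcases hc01 with h0 | h1
      · -- degree 0
        have hm0 : m = 0 := finsupp_sum_eq_zero m (by omega)
        subst hm0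
        simp only [Finsupp.prod_zero_index]
        rw [integral_const, probReal_univ, Finset.sum_const, hY,
          card_antipodal φ hφinj hφneg]
        simp only [nsmul_eq_mul, mul_one, ENNReal.toReal_one, smul_eq_mul, one_mul]
        field_simp
      · -- degree 2
        have hm2 : (m.sum fun _ e => e) = 2 := by omega
        obtain ⟨a, b, hab⟩ := finsupp_sum_eq_two m hm2
        subst hab
        have hP : ∀ y : Sp D, ((Finsupp.single a 1 + Finsupp.single b 1).prod
            fun c e => ((y : Eu D) c) ^ e) = (y : Eu D) a * (y : Eu D) b :=
          fun y => finsupp_prod_two a b _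
        rw [hYsum]
        simp only [hP]
        have hJ : ∫ z, ((z : Eu D) a * (z : Eu D) b) ∂(uniformSphereMeasure D)
            = if a = b then 1/(D:ℝ) else 0 := by
          by_cases h : a = b
          · subst h
            rw [if_pos rfl]
            rw [show (fun z : Sp D => (z : Eu D) a * (z : Eu D) a)
              = fun z : Sp D => ((z : Eu D) a) ^ 2 from funext fun z => by ring]
            exact integral_coord_sq hD1 a
          · rw [if_neg h]
            exact integral_coord_mul hD1 h
        rw [hJ]
        have hneg2 : ∀ i, ((-φ i : Sp D) : Eu D) a * ((-φ i : Sp D) : Eu D) b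
            = (φ i : Eu D) a * (φ i : Eu D) b := by
          intro i
          show (-(φ i : Eu D)) a * (-(φ i : Eu D)) b = _
          show (-((φ i : Eu D) a)) * (-((φ i : Eu D) b)) = _
          ring
        simp only [hneg2]
        rw [hSfact a b]
        by_cases h : a = b
        · simp only [if_pos h]
          field_simp
          push_cast
          ring
        · simp only [if_neg h]
          simp
    · -- odd degree
      have hR : ∫ z, (m.prod fun a e => ((z : Eu D) a) ^ e) ∂(uniformSphereMeasure D) = 0 :=
        usm_integral_odd _ (fun z => by rw [hnegP z, hko.neg_one_pow, neg_one_mul])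
      rw [hR, hYsum]
      have hterm : ∀ i : Fin N, (Finsupp.prod m fun a e => (((-φ i : Sp D) : Eu D) a) ^ e)
          = -(Finsupp.prod m fun a e => (((φ i : Sp D) : Eu D) a) ^ e) := fun i => by
        rw [hnegP (φ i), hko.neg_one_pow, neg_one_mul]
      rw [Finset.sum_congr rfl fun i _ => hterm i, Finset.sum_neg_distrib, add_neg_cancel,
        zero_div]
  -- assemble over all monomials of f
  have hintc : ∀ m ∈ f.support, Integrable (fun z : Sp D =>
      MvPolynomial.coeff m f * (m.prod fun a e => ((z : Eu D) a) ^ e))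
      (uniformSphereMeasure D) := fun m _ => (hintm m).const_mul _
  calc (∑ y ∈ Y, MvPolynomial.eval (y : Eu D) f) / ((2*N : ℕ) : ℝ)
      = (∑ m ∈ f.support, MvPolynomial.coeff m f *
          ∑ y ∈ Y, (m.prod fun a e => ((y : Eu D) a) ^ e)) / ((2*N : ℕ) : ℝ) := by
        congr 1
        have heval : ∀ z : Sp D, MvPolynomial.eval ((z : Eu D)) f =
            ∑ m ∈ f.support, MvPolynomial.coeff m f *
              (m.prod fun a e => ((z : Eu D) a) ^ e) := by
          intro z
          rw [MvPolynomial.eval_eq]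
          rfl
        rw [Finset.sum_congr rfl (fun y _ => heval y), Finset.sum_comm]
        exact Finset.sum_congr rfl fun m _ => by rw [Finset.mul_sum]
    _ = ∑ m ∈ f.support, MvPolynomial.coeff m f *
          ((∑ y ∈ Y, (m.prod fun a e => ((y : Eu D) a) ^ e)) / ((2*N : ℕ) : ℝ)) := by
        rw [Finset.sum_div]
        exact Finset.sum_congr rfl fun m _ => by ring
    _ = ∑ m ∈ f.support, MvPolynomial.coeff m f *
          ∫ z, (m.prod fun a e => ((z : Eu D) a) ^ e) ∂(uniformSphereMeasure D) := by
        refine Finset.sum_congr rfl fun m hmem => ?_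
        rw [hmono m (le_trans (MvPolynomial.le_totalDegree hmem) hf)]
    _ = ∫ z, MvPolynomial.eval ((z : Sp D) : Eu D) f ∂(uniformSphereMeasure D) := by
        rw [show (∑ m ∈ f.support, MvPolynomial.coeff m f *
            ∫ z, (m.prod fun a e => ((z : Eu D) a) ^ e) ∂(uniformSphereMeasure D))
          = ∑ m ∈ f.support, ∫ z, MvPolynomial.coeff m f *
            (m.prod fun a e => ((z : Eu D) a) ^ e) ∂(uniformSphereMeasure D) from
          Finset.sum_congr rfl fun m _ => (MeasureTheory.integral_const_mul _ _).symm]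
        rw [← integral_finset_sum _ hintc]
        refine integral_congr_ae (Filter.Eventually.of_forall fun z => ?_)
        show ∑ m ∈ f.support, MvPolynomial.coeff m f *
            (m.prod fun a e => ((z : Eu D) a) ^ e) = MvPolynomial.eval ((z : Eu D)) f
        rw [MvPolynomial.eval_eq]
        rfl
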